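/- arXiv:1606.01005 — 7 statements merged into one kernel-verified Lean document; each statement's English description precedes it below -/
import Mathlib

section
/- Under Assumptions 1 and 2, for every scalar α > 0 and every k ∈ ℕ, S_k^α = ⋂_{j=0}^{k} (A^j)⁻¹(𝒳 ⊖ R_j^α), where (A^j)⁻¹ denotes the preimage under the j-th matrix power of A. -/
open Matrix Set Pointwise

namespace RPIScaling

/-- A C-set in `ℝ^p`: convex, compact, containing the origin in its interior. -/
def IsCSet {p : ℕ} (S : Set (Fin p → ℝ)) : Prop :=
  Convex ℝ S ∧ IsCompact S ∧ (0 : Fin p → ℝ) ∈ interior S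

/-- Pontryagin difference `U ⊖ V`. -/
def pontryaginDiff {p : ℕ} (U V : Set (Fin p → ℝ)) : Set (Fin p → ℝ) :=
  {x | ∀ v ∈ V, x + v ∈ U}

/-- Upper-left `r × r` block of `A`. -/
def blockA11 {n r : ℕ} (hrn : r ≤ n) (A : Matrix (Fin n) (Fin n) ℝ) :
    Matrix (Fin r) (Fin r) ℝ :=
  A.submatrix (Fin.castLE hrn) (Fin.castLE hrn)

/-- Upper `r × m` block of `E`. -/
def blockE1 {n m r : ℕ} (hrn : r ≤ n) (E : Matrix (Fin n) (Fin m) ℝ) :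
    Matrix (Fin r) (Fin m) ℝ :=
  E.submatrix (Fin.castLE hrn) id

/-- Lower-right `(n-r) × (n-r)` block of `A`. -/
def blockA22 {n : ℕ} (r : ℕ) (A : Matrix (Fin n) (Fin n) ℝ) :
    Matrix (Fin (n - r)) (Fin (n - r)) ℝ :=
  A.submatrix (fun i => ⟨r + i.1, by have h := i.2; omega⟩)
    (fun i => ⟨r + i.1, by have h := i.2; omega⟩)

/-- The controllability matrix `[E₁, A₁₁E₁, …, A₁₁^{r-1}E₁]` of the pair `(A₁₁, E₁)`. -/
def controllabilityMatrix {n m r : ℕ} (hrn : r ≤ n) (A : Matrix (Fin n) (Fin n) ℝ)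
    (E : Matrix (Fin n) (Fin m) ℝ) : Matrix (Fin r) (Fin r × Fin m) ℝ :=
  Matrix.of fun i p => ((blockA11 hrn A) ^ (p.1 : ℕ) * blockE1 hrn E) i p.2

/-- Assumption 1: block structure of `A` and `E`, controllability of `(A₁₁, E₁)`,
and `𝒳`, `𝒟*` are C-sets. -/
structure Assumption1 {n m r : ℕ} (hrn : r ≤ n) (A : Matrix (Fin n) (Fin n) ℝ)
    (E : Matrix (Fin n) (Fin m) ℝ) (X : Set (Fin n → ℝ)) (D : Set (Fin m → ℝ)) : Prop where
  hn : 0 < n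
  hm : 0 < m
  hr : 0 < r
  lowerLeftA : ∀ i j : Fin n, r ≤ (i : ℕ) → (j : ℕ) < r → A i j = 0
  lowerE : ∀ i : Fin n, r ≤ (i : ℕ) → ∀ j, E i j = 0
  controllable : (controllabilityMatrix hrn A E).rank = r
  hX : IsCSet X
  hD : IsCSet D

/-- All complex eigenvalues of `M` have modulus `< 1`. -/
def StrictlyStable {p : ℕ} (M : Matrix (Fin p) (Fin p) ℝ) : Prop :=
  ∀ μ ∈ spectrum ℂ (M.map (algebraMap ℝ ℂ)), ‖μ‖ < 1

/-- All complex eigenvalues of `M` have modulus `≤ 1`. -/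
def Stable {p : ℕ} (M : Matrix (Fin p) (Fin p) ℝ) : Prop :=
  ∀ μ ∈ spectrum ℂ (M.map (algebraMap ℝ ℂ)), ‖μ‖ ≤ 1

/-- Assumption 2: the eigenvalues of `A₁₁` and `A₂₂` are strictly stable. -/
def Assumption2 {n r : ℕ} (hrn : r ≤ n) (A : Matrix (Fin n) (Fin n) ℝ) : Prop :=
  StrictlyStable (blockA11 hrn A) ∧ StrictlyStable (blockA22 r A)

/-- Assumption 2': the eigenvalues of `A₂₂` are stable. -/
def Assumption2' {n : ℕ} (r : ℕ) (A : Matrix (Fin n) (Fin n) ℝ) : Prop :=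
  Stable (blockA22 r A)

/-- `P` is robust positively invariant for disturbance scaling `α`. -/
def IsRPI {n m : ℕ} (A : Matrix (Fin n) (Fin n) ℝ) (E : Matrix (Fin n) (Fin m) ℝ)
    (X : Set (Fin n → ℝ)) (D : Set (Fin m → ℝ)) (α : ℝ) (P : Set (Fin n → ℝ)) : Prop :=
  P ⊆ X ∧ ∀ x ∈ P, ∀ d ∈ α • D, A.mulVec x + E.mulVec d ∈ P

/-- The maximal RPI set: the union of all RPI sets. -/
def Pmax {n m : ℕ} (A : Matrix (Fin n) (Fin n) ℝ) (E : Matrix (Fin n) (Fin m) ℝ)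
    (X : Set (Fin n → ℝ)) (D : Set (Fin m → ℝ)) (α : ℝ) : Set (Fin n → ℝ) :=
  ⋃₀ {P | IsRPI A E X D α P}

/-- The minimal RPI set: the intersection of all nonempty RPI sets together with the MRPI set. -/
def Pmin {n m : ℕ} (A : Matrix (Fin n) (Fin n) ℝ) (E : Matrix (Fin n) (Fin m) ℝ)
    (X : Set (Fin n → ℝ)) (D : Set (Fin m → ℝ)) (α : ℝ) : Set (Fin n → ℝ) :=
  ⋂₀ ({P | IsRPI A E X D α P ∧ P.Nonempty} ∪ {Pmax A E X D α})

/-- The sequence `S_k^α`. -/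
def Sseq {n m : ℕ} (A : Matrix (Fin n) (Fin n) ℝ) (E : Matrix (Fin n) (Fin m) ℝ)
    (X : Set (Fin n → ℝ)) (D : Set (Fin m → ℝ)) (α : ℝ) : ℕ → Set (Fin n → ℝ)
  | 0 => X
  | k + 1 => A.mulVec ⁻¹' (pontryaginDiff (Sseq A E X D α k) (E.mulVec '' (α • D))) ∩ X

/-- The limit set `S_∞^α`. -/
def Sinf {n m : ℕ} (A : Matrix (Fin n) (Fin n) ℝ) (E : Matrix (Fin n) (Fin m) ℝ)
    (X : Set (Fin n → ℝ)) (D : Set (Fin m → ℝ)) (α : ℝ) : Set (Fin n → ℝ) :=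
  ⋂ k : ℕ, Sseq A E X D α k

/-- The sequence `R_k^α` of reachable sets. -/
def Rseq {n m : ℕ} (A : Matrix (Fin n) (Fin n) ℝ) (E : Matrix (Fin n) (Fin m) ℝ)
    (D : Set (Fin m → ℝ)) (α : ℝ) : ℕ → Set (Fin n → ℝ)
  | 0 => {0}
  | k + 1 => A.mulVec '' (Rseq A E D α k) + E.mulVec '' (α • D)

/-- The limit set `R_∞^α`. -/
def Rinf {n m : ℕ} (A : Matrix (Fin n) (Fin n) ℝ) (E : Matrix (Fin n) (Fin m) ℝ)
    (D : Set (Fin m → ℝ)) (α : ℝ) : Set (Fin n → ℝ) :=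
  ⋃ k : ℕ, Rseq A E D α k

/-- The critical scaling factor `α*`. -/
noncomputable def alphaStar {n m : ℕ} (A : Matrix (Fin n) (Fin n) ℝ)
    (E : Matrix (Fin n) (Fin m) ℝ) (X : Set (Fin n → ℝ)) (D : Set (Fin m → ℝ)) : ℝ :=
  sSup {α : ℝ | 0 < α ∧ Rinf A E D α ⊆ X}

/-- The sequence `Q_k^α` used to characterize the maximal controlled invariant set. -/
def Qseq {n m : ℕ} (A : Matrix (Fin n) (Fin n) ℝ) (E : Matrix (Fin n) (Fin m) ℝ)
    (X : Set (Fin n → ℝ)) (D : Set (Fin m → ℝ)) (α : ℝ) : ℕ → Set (Fin n → ℝ)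
  | 0 => X
  | k + 1 => A.mulVec ⁻¹' (Qseq A E X D α k + -(E.mulVec '' (α • D))) ∩ X

/-- `C` is controlled invariant for input-constraint scaling `α`. -/
def IsCI {n m : ℕ} (A : Matrix (Fin n) (Fin n) ℝ) (E : Matrix (Fin n) (Fin m) ℝ)
    (X : Set (Fin n → ℝ)) (D : Set (Fin m → ℝ)) (α : ℝ) (C : Set (Fin n → ℝ)) : Prop :=
  C ⊆ X ∧ ∀ x ∈ C, ∃ d ∈ α • D, A.mulVec x + E.mulVec d ∈ C

/-- The maximal controlled invariant set: the union of all CI sets. -/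
def Cmax {n m : ℕ} (A : Matrix (Fin n) (Fin n) ℝ) (E : Matrix (Fin n) (Fin m) ℝ)
    (X : Set (Fin n → ℝ)) (D : Set (Fin m → ℝ)) (α : ℝ) : Set (Fin n → ℝ) :=
  ⋃₀ {C | IsCI A E X D α C}

/-- The Minkowski sum `W = ⨁_{k=0}^{M-1} A₁₁^k E₁ 𝒟*`. -/
def Wset {n m r : ℕ} (hrn : r ≤ n) (A : Matrix (Fin n) (Fin n) ℝ)
    (E : Matrix (Fin n) (Fin m) ℝ) (D : Set (Fin m → ℝ)) (M : ℕ) : Set (Fin r → ℝ) :=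
  {w | ∃ d : Fin M → Fin m → ℝ, (∀ i, d i ∈ D) ∧
    w = ∑ i : Fin M, ((blockA11 hrn A) ^ (i : ℕ) * blockE1 hrn E).mulVec (d i)}

/-! Reading `R_{j+1}^α` as `A^j E 𝒟^α ⊕ R_j^α`, the `(j+1)`-th constraint set
`(A^{j+1})⁻¹(𝒳 ⊖ R_{j+1}^α)` is `A⁻¹` of the `j`-th one shrunk by `E 𝒟^α`. Preimages and
Pontryagin differences commute with intersections, so one step of the recursion for `S_k^α`
shifts every constraint of `S_k^α` by one and adds `𝒳`, the `0`-th constraint. -/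

section PontryaginDiff

variable {p : ℕ}

lemma pontryaginDiff_add (U V W : Set (Fin p → ℝ)) :
    pontryaginDiff U (V + W) = pontryaginDiff (pontryaginDiff U W) V := by
  ext x
  simp only [pontryaginDiff, mem_ofPred_eq, ← image2_add, forall_mem_image2, add_assoc]

lemma pontryaginDiff_biInter {ι : Type*} (s : Finset ι) (U : ι → Set (Fin p → ℝ))
    (V : Set (Fin p → ℝ)) :
    pontryaginDiff (⋂ i ∈ s, U i) V = ⋂ i ∈ s, pontryaginDiff (U i) V := by
  ext x
  simp only [pontryaginDiff, mem_iInter, mem_ofPred_eq]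
  exact forall₂_comm

lemma preimage_pontryaginDiff_image {q : ℕ} (M : Matrix (Fin p) (Fin q) ℝ)
    (U : Set (Fin p → ℝ)) (V : Set (Fin q → ℝ)) :
    M.mulVec ⁻¹' pontryaginDiff U (M.mulVec '' V) = pontryaginDiff (M.mulVec ⁻¹' U) V := by
  ext x
  simp [pontryaginDiff, mulVec_add]

end PontryaginDiff

lemma image_mulVec_add {p q : ℕ} (M : Matrix (Fin p) (Fin q) ℝ) (V W : Set (Fin q → ℝ)) :
    M.mulVec '' (V + W) = M.mulVec '' V + M.mulVec '' W :=
  Set.image_add M.mulVecLin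

lemma biInter_range_succ' {β : Type*} (f : ℕ → Set β) (k : ℕ) :
    ⋂ j ∈ Finset.range (k + 1), f j = f 0 ∩ ⋂ j ∈ Finset.range k, f (j + 1) := by
  ext x
  simp only [mem_inter_iff, mem_iInter, Finset.mem_range, Nat.forall_lt_succ_left]

section Reachable

variable {n m : ℕ} (A : Matrix (Fin n) (Fin n) ℝ) (E : Matrix (Fin n) (Fin m) ℝ)
  (X : Set (Fin n → ℝ)) (D : Set (Fin m → ℝ)) (α : ℝ)

lemma rseq_succ_eq_image_pow_add (j : ℕ) :
    Rseq A E D α (j + 1) = (A ^ j).mulVec '' (E.mulVec '' (α • D)) + Rseq A E D α j := by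
  induction j with
  | zero => simp [Rseq]
  | succ j ih =>
    conv_lhs => rw [Rseq, ih, image_mulVec_add, add_assoc]
    congr 1
    rw [image_image]
    simp [mulVec_mulVec, pow_succ']

lemma preimage_pow_zero_pontryaginDiff_rseq :
    (A ^ 0).mulVec ⁻¹' pontryaginDiff X (Rseq A E D α 0) = X := by
  ext x
  simp [Rseq, pontryaginDiff]

lemma preimage_pow_succ_pontryaginDiff_rseq (j : ℕ) :
    (A ^ (j + 1)).mulVec ⁻¹' pontryaginDiff X (Rseq A E D α (j + 1)) =
      A.mulVec ⁻¹' pontryaginDiff ((A ^ j).mulVec ⁻¹' pontryaginDiff X (Rseq A E D α j))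
        (E.mulVec '' (α • D)) := by
  rw [rseq_succ_eq_image_pow_add, pontryaginDiff_add, ← preimage_pontryaginDiff_image,
    ← Set.preimage_comp, pow_succ]
  congr 1
  exact funext fun x => (mulVec_mulVec x (A ^ j) A).symm

end Reachable

theorem sseq_eq_inter_preimages_general {n m : ℕ}
    (A : Matrix (Fin n) (Fin n) ℝ) (E : Matrix (Fin n) (Fin m) ℝ)
    (X : Set (Fin n → ℝ)) (D : Set (Fin m → ℝ))
    (α : ℝ) (k : ℕ) :
    Sseq A E X D α k =
      ⋂ j ∈ Finset.range (k + 1), (A ^ j).mulVec ⁻¹' pontryaginDiff X (Rseq A E D α j) := by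
  induction k with
  | zero => simp only [Sseq, zero_add, Finset.range_one, Finset.set_biInter_singleton,
      preimage_pow_zero_pontryaginDiff_rseq]
  | succ k ih =>
    rw [biInter_range_succ', Sseq, ih, pontryaginDiff_biInter, preimage_iInter₂,
      preimage_pow_zero_pontryaginDiff_rseq, inter_comm]
    simp only [preimage_pow_succ_pontryaginDiff_rseq]

theorem sseq_eq_inter_preimages {n m r : ℕ} (hrn : r ≤ n)
    (A : Matrix (Fin n) (Fin n) ℝ) (E : Matrix (Fin n) (Fin m) ℝ)
    (X : Set (Fin n → ℝ)) (D : Set (Fin m → ℝ))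
    (hA1 : Assumption1 hrn A E X D) (hA2 : Assumption2 hrn A)
    (α : ℝ) (hα : 0 < α) (k : ℕ) :
    Sseq A E X D α k =
      ⋂ j ∈ Finset.range (k + 1), (A ^ j).mulVec ⁻¹' pontryaginDiff X (Rseq A E D α j) :=
  sseq_eq_inter_preimages_general A E X D α k

end RPIScaling
end

section
/- Under Assumptions 1 and 2, let η ∈ (0,1), let α > 0 satisfy α < α*, and let δ > 0 satisfy δ ≤ (1−η)(α* − α). Then for every k ∈ ℕ it holds that η • S_k^α ⊆ S_k^{α+δ} ⊆ S_k^α. -/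
open Matrix Set Pointwise

namespace RPIScaling

/-! Membership `x ∈ S_k^α` is jointly convex in `(α, x)` and antitone in `α`. Since
`0 ∈ S_k^{α*}`, for `x ∈ S_k^α` the point `η x = η x + (1 - η) 0` lies in
`S_k^{η α + (1 - η) α*} ⊆ S_k^{α + δ}`. -/

open Filter Topology

theorem _root_.StarConvex.smul_set_subset_smul_set {E : Type*} [AddCommGroup E] [Module ℝ E]
    {s : Set E} (hs : StarConvex ℝ 0 s) {a b : ℝ} (ha : 0 ≤ a) (hab : a ≤ b) :
    a • s ⊆ b • s := by
  rcases (ha.trans hab).eq_or_lt with hb | hb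
  · rw [le_antisymm (hb ▸ hab) ha, ← hb]
  rintro _ ⟨x, hx, rfl⟩
  exact ⟨(a / b) • x, hs.smul_mem hx (by positivity) (div_le_one_of_le₀ hab hb.le),
    by simp only [smul_smul, mul_div_cancel₀ _ hb.ne']⟩

section Sequences

variable {n m : ℕ} (A : Matrix (Fin n) (Fin n) ℝ) (E : Matrix (Fin n) (Fin m) ℝ)
  {X : Set (Fin n → ℝ)} {D : Set (Fin m → ℝ)}

theorem mem_Sseq_succ {α : ℝ} {k : ℕ} {x : Fin n → ℝ} :
    x ∈ Sseq A E X D α (k + 1) ↔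
      (∀ d ∈ α • D, A *ᵥ x + E *ᵥ d ∈ Sseq A E X D α k) ∧ x ∈ X := by
  simp [Sseq, pontryaginDiff]

theorem Rseq_mono (hD : StarConvex ℝ 0 D) {α β : ℝ} (hα : 0 ≤ α) (hαβ : α ≤ β) (k : ℕ) :
    Rseq A E D α k ⊆ Rseq A E D β k := by
  induction k with
  | zero => exact subset_rfl
  | succ k ih =>
    exact add_subset_add (image_mono ih)
      (image_mono (hD.smul_set_subset_smul_set hα hαβ))

theorem smul_mem_Rseq (t : ℝ) {β : ℝ} {k : ℕ} {x : Fin n → ℝ} (hx : x ∈ Rseq A E D β k) :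
    t • x ∈ Rseq A E D (t * β) k := by
  induction k generalizing x with
  | zero => simp_all [Rseq]
  | succ k ih =>
    obtain ⟨_, ⟨y, hy, rfl⟩, _, ⟨_, ⟨d, hd, rfl⟩, rfl⟩, rfl⟩ := hx
    have hlin : t • (A *ᵥ y + E *ᵥ (β • d)) = A *ᵥ (t • y) + E *ᵥ ((t * β) • d) := by
      simp only [mulVec_smul, smul_add, smul_smul]
    rw [hlin]
    exact add_mem_add (mem_image_of_mem _ (ih hy)) (mem_image_of_mem _ (smul_mem_smul_set hd))

theorem Rseq_subset_of_lt_alphaStar (hD : StarConvex ℝ 0 D) {β : ℝ} (hβ : 0 ≤ β)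
    (hβα : β < alphaStar A E X D) (k : ℕ) : Rseq A E D β k ⊆ X := by
  have hne : {γ : ℝ | 0 < γ ∧ Rinf A E D γ ⊆ X}.Nonempty := by
    by_contra h
    rw [not_nonempty_iff_eq_empty] at h
    simp only [alphaStar, h, Real.sSup_empty] at hβα
    linarith
  obtain ⟨γ, ⟨-, hγ⟩, hβγ⟩ := exists_lt_of_lt_csSup hne hβα
  exact (Rseq_mono A E hD hβ hβγ.le k).trans (subset_iUnion (Rseq A E D γ) k |>.trans hγ)

/-- `R_k^{α*} ⊆ 𝒳` although `α*` itself need not be admissible: `t • R_k^{α*} ⊆ R_k^{t α*} ⊆ 𝒳`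
for every `t < 1`, and `𝒳` is closed. -/
theorem Rseq_alphaStar_subset (hX : IsClosed X) (hD : StarConvex ℝ 0 D)
    (hα : 0 < alphaStar A E X D) (k : ℕ) : Rseq A E D (alphaStar A E X D) k ⊆ X := by
  intro x hx
  have hlim : Tendsto (fun t : ℝ => t • x) (𝓝[<] 1) (𝓝 x) := by
    simpa using ((tendsto_id (x := 𝓝 (1 : ℝ))).smul_const x).mono_left nhdsWithin_le_nhds
  refine hX.mem_of_tendsto hlim ?_
  filter_upwards [Ioo_mem_nhdsLT (zero_lt_one' ℝ)] with t ⟨ht0, ht1⟩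
  exact Rseq_subset_of_lt_alphaStar A E hD (by positivity) (by nlinarith) k
    (smul_mem_Rseq A E t hx)

theorem Rseq_subset_Sseq {α : ℝ} (hR : ∀ j, Rseq A E D α j ⊆ X) (k j : ℕ) :
    Rseq A E D α j ⊆ Sseq A E X D α k := by
  induction k generalizing j with
  | zero => exact hR j
  | succ k ih =>
    intro x hx
    refine (mem_Sseq_succ A E).2 ⟨fun d hd => ih (j + 1) ?_, hR j hx⟩
    exact add_mem_add (mem_image_of_mem _ hx) (mem_image_of_mem _ hd)

theorem zero_mem_Sseq {α : ℝ} (hR : ∀ j, Rseq A E D α j ⊆ X) (k : ℕ) :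
    0 ∈ Sseq A E X D α k :=
  Rseq_subset_Sseq A E hR k 0 rfl

theorem Sseq_antitone (hD : StarConvex ℝ 0 D) {α β : ℝ} (hα : 0 ≤ α) (hαβ : α ≤ β) (k : ℕ) :
    Sseq A E X D β k ⊆ Sseq A E X D α k := by
  induction k with
  | zero => exact subset_rfl
  | succ k ih =>
    intro x hx
    rw [mem_Sseq_succ] at hx ⊢
    exact ⟨fun d hd => ih (hx.1 d (hD.smul_set_subset_smul_set hα hαβ hd)), hx.2⟩

/-- A disturbance of size `η α + (1 - η) β` splits, by convexity of `𝒟*`, into `η` times one of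
size `α` plus `1 - η` times one of size `β`. -/
theorem smul_add_smul_mem_Sseq (hX : Convex ℝ X) (hD : Convex ℝ D) {α β η : ℝ}
    (hα : 0 ≤ α) (hβ : 0 ≤ β) (hη0 : 0 ≤ η) (hη1 : η ≤ 1) {k : ℕ} {x z : Fin n → ℝ}
    (hx : x ∈ Sseq A E X D α k) (hz : z ∈ Sseq A E X D β k) :
    η • x + (1 - η) • z ∈ Sseq A E X D (η * α + (1 - η) * β) k := by
  have hη1' : 0 ≤ 1 - η := sub_nonneg.2 hη1
  induction k generalizing x z with
  | zero => exact hX hx hz hη0 hη1' (add_sub_cancel η 1)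
  | succ k ih =>
    rw [mem_Sseq_succ] at hx hz ⊢
    refine ⟨?_, hX hx.2 hz.2 hη0 hη1' (add_sub_cancel η 1)⟩
    intro e he
    rw [hD.add_smul (by positivity) (by positivity), ← smul_smul, ← smul_smul] at he
    obtain ⟨_, ⟨_, ⟨d, hd, rfl⟩, rfl⟩, _, ⟨_, ⟨w, hw, rfl⟩, rfl⟩, rfl⟩ := he
    have hlin : A *ᵥ (η • x + (1 - η) • z) + E *ᵥ (η • α • d + (1 - η) • β • w) =
        η • (A *ᵥ x + E *ᵥ (α • d)) + (1 - η) • (A *ᵥ z + E *ᵥ (β • w)) := by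
      simp only [mulVec_add, mulVec_smul, smul_add]
      abel
    rw [hlin]
    exact ih (hx.1 _ (smul_mem_smul_set hd)) (hz.1 _ (smul_mem_smul_set hw))

end Sequences

theorem sseq_scaling_bounds_general {n m r : ℕ} (hrn : r ≤ n)
    (A : Matrix (Fin n) (Fin n) ℝ) (E : Matrix (Fin n) (Fin m) ℝ)
    (X : Set (Fin n → ℝ)) (D : Set (Fin m → ℝ))
    (hA1 : Assumption1 hrn A E X D)
    (η : ℝ) (hη0 : 0 < η) (hη1 : η < 1)
    (α : ℝ) (hα : 0 < α) (hαlt : α < alphaStar A E X D)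
    (δ : ℝ) (hδ0 : 0 < δ) (hδ : δ ≤ (1 - η) * (alphaStar A E X D - α)) (k : ℕ) :
    η • Sseq A E X D α k ⊆ Sseq A E X D (α + δ) k ∧
      Sseq A E X D (α + δ) k ⊆ Sseq A E X D α k := by
  obtain ⟨hXconv, hXcomp, -⟩ := hA1.hX
  obtain ⟨hDconv, -, hD0⟩ := hA1.hD
  have hDstar : StarConvex ℝ 0 D := hDconv.starConvex (interior_subset hD0)
  set αs := alphaStar A E X D
  have hzero : 0 ∈ Sseq A E X D αs k :=
    zero_mem_Sseq A E (Rseq_alphaStar_subset A E hXcomp.isClosed hDstar (hα.trans hαlt)) k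
  refine ⟨?_, Sseq_antitone A E hDstar hα.le (by linarith) k⟩
  rintro _ ⟨x, hx, rfl⟩
  have hcomb := smul_add_smul_mem_Sseq A E hXconv hDconv hα.le (hα.trans hαlt).le hη0.le
    hη1.le hx hzero
  rw [smul_zero, add_zero] at hcomb
  exact Sseq_antitone A E hDstar (by positivity) (by linarith) k hcomb

theorem sseq_scaling_bounds {n m r : ℕ} (hrn : r ≤ n)
    (A : Matrix (Fin n) (Fin n) ℝ) (E : Matrix (Fin n) (Fin m) ℝ)
    (X : Set (Fin n → ℝ)) (D : Set (Fin m → ℝ))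
    (hA1 : Assumption1 hrn A E X D) (hA2 : Assumption2 hrn A)
    (η : ℝ) (hη0 : 0 < η) (hη1 : η < 1)
    (α : ℝ) (hα : 0 < α) (hαlt : α < alphaStar A E X D)
    (δ : ℝ) (hδ0 : 0 < δ) (hδ : δ ≤ (1 - η) * (alphaStar A E X D - α)) (k : ℕ) :
    η • Sseq A E X D α k ⊆ Sseq A E X D (α + δ) k ∧
      Sseq A E X D (α + δ) k ⊆ Sseq A E X D α k :=
  sseq_scaling_bounds_general hrn A E X D hA1 η hη0 hη1 α hα hαlt δ hδ0 hδ k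

end RPIScaling
end

section
/- Under Assumptions 1 and 2, the critical scaling factor α* is well-defined and finite: the set {α > 0 | R_∞^α ⊆ 𝒳} is nonempty and bounded above, so that 0 < α* < ∞. -/
open Matrix Set Pointwise

namespace RPIScaling

/-!
`A` is block upper triangular, so its characteristic polynomial is that of `A₁₁` times that of
`A₂₂` and `A` is strictly stable; by Gelfand's formula `∑ₖ ‖Aᵏ‖ < ∞`. A point of `R_k^α` is
`∑_{j<k} Aʲ E dⱼ` with `dⱼ ∈ α𝒟*`, so `R_∞^α` lies in a ball of radius proportional to `α`,
which fits in the neighbourhood `𝒳` of `0` for small `α`. Conversely, controllability forces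
`E ≠ 0`, and as `𝒟*` is a neighbourhood of `0` some `d ∈ 𝒟*` has `E d ≠ 0`; then
`α E d ∈ R_1^α ⊆ 𝒳` bounds `α`, since `𝒳` is bounded.
-/

-- The ℓ∞ operator norm on matrices is the one compatible with the sup norm on `Fin n → ℝ`.
attribute [local instance] Matrix.linftyOpNormedAddCommGroup Matrix.linftyOpNormedRing
  Matrix.linftyOpNormedAlgebra

open Filter Topology Bornology
open scoped ENNReal

theorem _root_.summable_norm_pow_of_spectralRadius_lt_one {𝔸 : Type*} [NormedRing 𝔸]
    [NormedAlgebra ℂ 𝔸] [CompleteSpace 𝔸] {a : 𝔸} (ha : spectralRadius ℂ a < 1) :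
    Summable fun k : ℕ => ‖a ^ k‖ := by
  obtain ⟨ρ, hρa, hρ1⟩ := ENNReal.lt_iff_exists_nnreal_btwn.1 ha
  have hρ1 : (ρ : ℝ) < 1 := by exact_mod_cast hρ1
  refine (summable_geometric_of_lt_one ρ.2 hρ1).of_norm_bounded_eventually_nat ?_
  filter_upwards
    [(spectrum.pow_nnnorm_pow_one_div_tendsto_nhds_spectralRadius a).eventually_lt_const hρa,
    eventually_ge_atTop 1] with k hk hk1
  have hk0 : (k : ℝ) ≠ 0 := by positivity
  have : (‖a ^ k‖₊ : ℝ≥0∞) < (ρ : ℝ≥0∞) ^ k := by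
    have := ENNReal.rpow_lt_rpow hk (by positivity : (0 : ℝ) < k)
    rwa [← ENNReal.rpow_mul, one_div_mul_cancel hk0, ENNReal.rpow_one, ENNReal.rpow_natCast] at this
  rw [norm_norm]
  exact_mod_cast this.le

theorem _root_.Matrix.linfty_opNorm_map_algebraMap_complex {ι κ : Type*} [Fintype ι] [Fintype κ]
    (M : Matrix ι κ ℝ) : ‖M.map (algebraMap ℝ ℂ)‖ = ‖M‖ := by
  simp [Matrix.linfty_opNorm_def]

theorem StrictlyStable.summable_norm_pow {p : ℕ} {M : Matrix (Fin p) (Fin p) ℝ}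
    (hM : StrictlyStable M) : Summable fun k : ℕ => ‖M ^ k‖ := by
  rcases isEmpty_or_nonempty (Fin p) with hp | hp
  · simp [Subsingleton.elim _ (0 : Matrix (Fin p) (Fin p) ℝ)]
  have hρ : spectralRadius ℂ (M.map (algebraMap ℝ ℂ)) < 1 := by
    simpa using spectrum.spectralRadius_lt_of_forall_lt (M.map (algebraMap ℝ ℂ)) (r := 1)
      fun z hz => by simpa [← NNReal.coe_lt_coe] using hM z hz
  refine (summable_norm_pow_of_spectralRadius_lt_one hρ).congr fun k => ?_
  rw [← Matrix.map_pow, Matrix.linfty_opNorm_map_algebraMap_complex]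

theorem charpoly_eq_charpoly_blockA11_mul_charpoly_blockA22 {n r : ℕ} (hrn : r ≤ n)
    {A : Matrix (Fin n) (Fin n) ℝ}
    (hlow : ∀ i j : Fin n, r ≤ (i : ℕ) → (j : ℕ) < r → A i j = 0) :
    A.charpoly = (blockA11 hrn A).charpoly * (blockA22 r A).charpoly := by
  let e : Fin r ⊕ Fin (n - r) ≃ Fin n := finSumFinEquiv.trans (finCongr (by omega))
  have he_inl (i : Fin r) : e (Sum.inl i) = Fin.castLE hrn i := Fin.ext (by simp [e])
  have he_inr (j : Fin (n - r)) : e (Sum.inr j) = ⟨r + j, by omega⟩ := Fin.ext (by simp [e])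
  have hblocks : A.submatrix e e = fromBlocks (blockA11 hrn A)
      (Matrix.of fun i j => A (e (Sum.inl i)) (e (Sum.inr j))) 0 (blockA22 r A) := by
    ext (i | i) (j | j)
    · simp [he_inl, blockA11]
    · rfl
    · exact hlow _ _ (by simp [he_inr]) (by simp [he_inl])
    · simp [he_inr, blockA22]
  rw [← Matrix.charpoly_reindex e.symm A, Matrix.reindex_apply, Equiv.symm_symm, hblocks,
    Matrix.charpoly_fromBlocks_zero₂₁]

theorem strictlyStable_of_lowerLeft_eq_zero {n r : ℕ} (hrn : r ≤ n)
    {A : Matrix (Fin n) (Fin n) ℝ}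
    (hlow : ∀ i j : Fin n, r ≤ (i : ℕ) → (j : ℕ) < r → A i j = 0)
    (h₁₁ : StrictlyStable (blockA11 hrn A)) (h₂₂ : StrictlyStable (blockA22 r A)) :
    StrictlyStable A := by
  intro μ hμ
  rw [Matrix.mem_spectrum_iff_isRoot_charpoly, Matrix.charpoly_map,
    charpoly_eq_charpoly_blockA11_mul_charpoly_blockA22 hrn hlow, Polynomial.map_mul,
    Polynomial.IsRoot.def, Polynomial.eval_mul, mul_eq_zero] at hμ
  rcases hμ with h | h
  · exact h₁₁ μ (by rwa [Matrix.mem_spectrum_iff_isRoot_charpoly, Matrix.charpoly_map])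
  · exact h₂₂ μ (by rwa [Matrix.mem_spectrum_iff_isRoot_charpoly, Matrix.charpoly_map])

section Reachable

variable {n m : ℕ} {A : Matrix (Fin n) (Fin n) ℝ} {E : Matrix (Fin n) (Fin m) ℝ}
  {D : Set (Fin m → ℝ)} {α : ℝ}

theorem exists_eq_sum_of_mem_Rseq {k : ℕ} {x : Fin n → ℝ} (hx : x ∈ Rseq A E D α k) :
    ∃ d : Fin k → Fin m → ℝ, (∀ j, d j ∈ α • D) ∧ x = ∑ j : Fin k, (A ^ (j : ℕ) * E) *ᵥ d j := by
  induction k generalizing x with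
  | zero => exact ⟨Fin.elim0, fun j => j.elim0, by simpa [Rseq] using hx⟩
  | succ k ih =>
    obtain ⟨_, ⟨y, hy, rfl⟩, _, ⟨d₀, hd₀, rfl⟩, rfl⟩ := hx
    obtain ⟨d, hd, rfl⟩ := ih hy
    refine ⟨Fin.cons d₀ d, Fin.cases hd₀ hd, ?_⟩
    simp [Fin.sum_univ_succ, Matrix.mulVec_sum, Matrix.mulVec_mulVec, pow_succ', Matrix.mul_assoc,
      add_comm]

theorem norm_le_of_mem_Rinf (hA : Summable fun j : ℕ => ‖A ^ j‖) (hα : 0 ≤ α) {δ : ℝ} (hδ : 0 ≤ δ)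
    (hD : ∀ d ∈ D, ‖d‖ ≤ δ) {x : Fin n → ℝ} (hx : x ∈ Rinf A E D α) :
    ‖x‖ ≤ α * δ * ‖E‖ * ∑' j, ‖A ^ j‖ := by
  obtain ⟨k, hk⟩ := Set.mem_iUnion.1 hx
  obtain ⟨d, hd, rfl⟩ := exists_eq_sum_of_mem_Rseq hk
  have hd' (j : Fin k) : ‖d j‖ ≤ α * δ := by
    obtain ⟨d', hd', hdj⟩ := hd j
    rw [← hdj, norm_smul, Real.norm_of_nonneg hα]
    exact mul_le_mul_of_nonneg_left (hD d' hd') hα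
  calc ‖∑ j : Fin k, (A ^ (j : ℕ) * E) *ᵥ d j‖
      ≤ ∑ j : Fin k, α * δ * ‖E‖ * ‖A ^ (j : ℕ)‖ := by
        refine norm_sum_le_of_le _ fun j _ => ?_
        calc ‖(A ^ (j : ℕ) * E) *ᵥ d j‖ ≤ ‖A ^ (j : ℕ)‖ * ‖E‖ * ‖d j‖ :=
              (Matrix.linfty_opNorm_mulVec _ _).trans
                (mul_le_mul_of_nonneg_right (Matrix.linfty_opNorm_mul _ _) (norm_nonneg _))
          _ ≤ ‖A ^ (j : ℕ)‖ * ‖E‖ * (α * δ) := by gcongr; exact hd' j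
          _ = α * δ * ‖E‖ * ‖A ^ (j : ℕ)‖ := by ring
    _ = α * δ * ‖E‖ * ∑ j ∈ Finset.range k, ‖A ^ j‖ := by
        rw [← Finset.mul_sum, Fin.sum_univ_eq_sum_range (fun j => ‖A ^ j‖)]
    _ ≤ α * δ * ‖E‖ * ∑' j, ‖A ^ j‖ := by
        gcongr
        exact hA.sum_le_tsum _ fun j _ => norm_nonneg _

theorem nonempty_setOf_Rinf_subset (hA : Summable fun j : ℕ => ‖A ^ j‖) (hD : IsBounded D)
    {X : Set (Fin n → ℝ)} (hX : X ∈ 𝓝 0) : {α : ℝ | 0 < α ∧ Rinf A E D α ⊆ X}.Nonempty := by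
  obtain ⟨ε, hε, hballX⟩ := Metric.mem_nhds_iff.1 hX
  obtain ⟨δ, hδ, hδD⟩ := hD.exists_pos_norm_le
  set C := δ * ‖E‖ * ∑' j, ‖A ^ j‖
  have hC : 0 ≤ C := by positivity
  refine ⟨ε / (C + 1), by positivity, fun x hx => hballX ?_⟩
  rw [Metric.mem_ball, dist_zero_right]
  calc ‖x‖ ≤ ε / (C + 1) * δ * ‖E‖ * ∑' j, ‖A ^ j‖ :=
        norm_le_of_mem_Rinf hA (by positivity) hδ.le hδD hx
    _ = ε * (C / (C + 1)) := by simp only [C]; ring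
    _ < ε := mul_lt_of_lt_one_right hε ((div_lt_one (by positivity)).2 (lt_add_one C))

theorem smul_mulVec_mem_Rinf {d : Fin m → ℝ} (hd : d ∈ D) : α • E *ᵥ d ∈ Rinf A E D α :=
  Set.mem_iUnion.2 ⟨1, ⟨0, ⟨0, rfl, Matrix.mulVec_zero A⟩, α • E *ᵥ d,
    ⟨α • d, Set.smul_mem_smul_set hd, Matrix.mulVec_smul E α d⟩, zero_add _⟩⟩

theorem bddAbove_setOf_Rinf_subset {X : Set (Fin n → ℝ)} (hX : IsBounded X) {d : Fin m → ℝ}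
    (hd : d ∈ D) (hEd : E *ᵥ d ≠ 0) : BddAbove {α : ℝ | 0 < α ∧ Rinf A E D α ⊆ X} := by
  obtain ⟨R, hR⟩ := hX.exists_norm_le
  refine ⟨R / ‖E *ᵥ d‖, fun α ⟨hα, hαX⟩ => ?_⟩
  have := hR _ (hαX (smul_mulVec_mem_Rinf (A := A) hd))
  rw [norm_smul, Real.norm_of_nonneg hα.le] at this
  exact (le_div_iff₀ (norm_pos_iff.2 hEd)).2 this

end Reachable

theorem ne_zero_of_rank_controllabilityMatrix {n m r : ℕ} (hrn : r ≤ n) (hr : 0 < r)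
    {A : Matrix (Fin n) (Fin n) ℝ} {E : Matrix (Fin n) (Fin m) ℝ}
    (h : (controllabilityMatrix hrn A E).rank = r) : E ≠ 0 := by
  rintro rfl
  have : controllabilityMatrix hrn A (0 : Matrix (Fin n) (Fin m) ℝ) = 0 := by
    ext i p
    simp [controllabilityMatrix, blockE1]
  rw [this, Matrix.rank_zero] at h
  omega

theorem _root_.Matrix.exists_mem_mulVec_ne_zero {ι κ : Type*} [Fintype ι] [Fintype κ]
    {E : Matrix ι κ ℝ} (hE : E ≠ 0) {D : Set (κ → ℝ)} (hD : D ∈ 𝓝 0) :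
    ∃ d ∈ D, E *ᵥ d ≠ 0 := by
  by_contra! h
  have hker : LinearMap.ker E.mulVecLin = ⊤ :=
    Submodule.eq_top_of_nonempty_interior' _
      ⟨0, mem_interior_iff_mem_nhds.2 (mem_of_superset hD fun d hd => h d hd)⟩
  refine hE (Matrix.ext_iff_mulVec.2 fun v => ?_)
  simpa using LinearMap.congr_fun (LinearMap.ker_eq_top.1 hker) v

theorem alphaStar_well_defined {n m r : ℕ} (hrn : r ≤ n)
    (A : Matrix (Fin n) (Fin n) ℝ) (E : Matrix (Fin n) (Fin m) ℝ)
    (X : Set (Fin n → ℝ)) (D : Set (Fin m → ℝ))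
    (hA1 : Assumption1 hrn A E X D) (hA2 : Assumption2 hrn A) :
    {α : ℝ | 0 < α ∧ Rinf A E D α ⊆ X}.Nonempty ∧
      BddAbove {α : ℝ | 0 < α ∧ Rinf A E D α ⊆ X} ∧
      0 < alphaStar A E X D := by
  obtain ⟨-, -, hr, hlow, -, hctrl, hX, hD⟩ := hA1
  have hsum := (strictlyStable_of_lowerLeft_eq_zero hrn hlow hA2.1 hA2.2).summable_norm_pow
  obtain ⟨α, hα⟩ := nonempty_setOf_Rinf_subset (E := E) hsum hD.2.1.isBounded
    (mem_interior_iff_mem_nhds.1 hX.2.2)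
  obtain ⟨d, hd, hEd⟩ := Matrix.exists_mem_mulVec_ne_zero
    (ne_zero_of_rank_controllabilityMatrix hrn hr hctrl) (mem_interior_iff_mem_nhds.1 hD.2.2)
  have hbdd := bddAbove_setOf_Rinf_subset (A := A) hX.2.1.isBounded hd hEd
  exact ⟨⟨α, hα⟩, hbdd, hα.1.trans_le (le_csSup hbdd hα)⟩

end RPIScaling
end

section
/- Under Assumptions 1 and 2, for every scalar α > 0 the following are equivalent: (a) α ≠ α*; (b) for every ε > 0 there exists δ > 0 such that P_min^α ⊆ P_min^{α+δ} ⊆ (1+ε) • P_min^α and P_max^{α+δ} ⊆ P_max^α ⊆ (1+ε) • P_max^{α+δ}. -/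
/-!
Since `A₁₁` and `A₂₂` are Schur stable, so is the block-triangular `A`, hence `A^k → 0`. Then a
nonempty RPI set for `α` forces `R_∞^α ⊆ 𝒳` (its points flow to `0` while carrying `R_k^α` along),
so `P_max^β = ∅` as soon as `R_∞^β ⊄ 𝒳`. This settles every `α` with no `γ > α` satisfying
`R_∞^γ ⊆ 𝒳`: such an `α` equals `α*` exactly when `R_∞^α ⊆ 𝒳`, i.e. exactly when
`0 ∈ P_max^α` although `P_max^(α + δ) = ∅` for every `δ > 0`.

Otherwise pick such a `γ`. The map `α ↦ P_max^α` is concave: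
`s • P_max^α + (1 - s) • P_max^γ ⊆ P_max^(s α + (1 - s) γ)`. As `0 ∈ P_max^γ`, this gives the outer
bound `P_max^α ⊆ (1 + ε) • P_max^(α + δ)`, and, starting from the neighbourhood `P_max^0` of `0`,
that `P_max^(α + δ)` is a neighbourhood of `0`. The latter makes `(1 + ε) • P ∩ P_max^(α + δ)` a
nonempty RPI set for `α + δ` whenever `P` is one for `α`, whence
`P_min^(α + δ) ⊆ (1 + ε) • P_min^α`.
-/

open Matrix Set Pointwise

namespace RPIScaling

open Filter Topology

theorem _root_.tendsto_pow_nhds_zero_of_spectralRadius_lt_one {𝔸 : Type*} [NormedRing 𝔸]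
    [NormedAlgebra ℂ 𝔸] [CompleteSpace 𝔸] {a : 𝔸} (ha : spectralRadius ℂ a < 1) :
    Tendsto (fun k => a ^ k) atTop (𝓝 0) := by
  obtain ⟨q, hρq, hq1⟩ := ENNReal.lt_iff_exists_nnreal_btwn.mp ha
  have hroot : ∀ᶠ k : ℕ in atTop, (‖a ^ k‖₊ : ENNReal) ^ (1 / k : ℝ) < q :=
    (spectrum.pow_nnnorm_pow_one_div_tendsto_nhds_spectralRadius a).eventually_lt_const hρq
  have hgeom : ∀ᶠ k : ℕ in atTop, ‖a ^ k‖ ≤ (q : ℝ) ^ k := by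
    filter_upwards [hroot, eventually_ge_atTop 1] with k hk hk1
    have hk0 : (k : ℝ) ≠ 0 := by positivity
    have := ENNReal.rpow_le_rpow hk.le (by positivity : (0 : ℝ) ≤ k)
    rw [← ENNReal.rpow_mul, one_div_mul_cancel hk0, ENNReal.rpow_one, ENNReal.rpow_natCast,
      ← ENNReal.coe_pow, ENNReal.coe_le_coe] at this
    exact_mod_cast this
  refine tendsto_zero_iff_norm_tendsto_zero.mpr <| squeeze_zero' (.of_forall fun _ => norm_nonneg _)
    hgeom (tendsto_pow_atTop_nhds_zero_of_lt_one q.coe_nonneg (by exact_mod_cast hq1))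

theorem _root_.Convex.smul_set_subset_self {V : Type*} [AddCommGroup V] [Module ℝ V] {S : Set V}
    (hS : Convex ℝ S) (h0 : (0 : V) ∈ S) {t : ℝ} (ht0 : 0 ≤ t) (ht1 : t ≤ 1) : t • S ⊆ S := by
  rintro _ ⟨x, hx, rfl⟩
  exact hS.smul_mem_of_zero_mem h0 hx ⟨ht0, ht1⟩

theorem _root_.Convex.smul_set_mono {V : Type*} [AddCommGroup V] [Module ℝ V] {S : Set V}
    (hS : Convex ℝ S) (h0 : (0 : V) ∈ S) {a b : ℝ} (ha : 0 ≤ a) (hab : a ≤ b) : a • S ⊆ b • S :=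
  calc a • S = a • S + 0 := (add_zero _).symm
    _ ⊆ a • S + (b - a) • S := add_subset_add_left (zero_subset.2 (zero_mem_smul_set h0))
    _ = b • S := by rw [← hS.add_smul ha (sub_nonneg.2 hab), add_sub_cancel]

theorem _root_.Matrix.image_mulVec_smul_set {ι κ R : Type*} [Fintype κ] [CommSemiring R]
    (M : Matrix ι κ R) (c : R) (S : Set (κ → R)) : M.mulVec '' (c • S) = c • M.mulVec '' S :=
  image_smul_set M.mulVecLin c S

theorem _root_.Matrix.tendsto_pow_mulVec {ι : Type*} [Fintype ι] [DecidableEq ι]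
    {M : Matrix ι ι ℝ} (hM : Tendsto (fun k => M ^ k) atTop (𝓝 0)) (x : ι → ℝ) :
    Tendsto (fun k => (M ^ k) *ᵥ x) atTop (𝓝 0) := by
  have hc : Continuous fun N : Matrix ι ι ℝ => N *ᵥ x :=
    continuous_id.matrix_mulVec continuous_const
  have := (hc.tendsto 0).comp hM
  rwa [zero_mulVec] at this

theorem charpoly_eq_blockA11_mul_blockA22 {n r : ℕ} (hrn : r ≤ n) (A : Matrix (Fin n) (Fin n) ℝ)
    (hA : ∀ i j : Fin n, r ≤ (i : ℕ) → (j : ℕ) < r → A i j = 0) :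
    A.charpoly = (blockA11 hrn A).charpoly * (blockA22 r A).charpoly := by
  let e : Fin r ⊕ Fin (n - r) ≃ Fin n := finSumFinEquiv.trans (finCongr (by omega))
  have h21 : (reindex e.symm e.symm A).toBlocks₂₁ = 0 := by
    ext i j
    exact hA _ _ (by simp [e]) (by simp [e])
  rw [← charpoly_reindex e.symm, ← fromBlocks_toBlocks (reindex e.symm e.symm A), h21,
    charpoly_fromBlocks_zero₂₁]
  rfl

section StrictlyStable

attribute [local instance] Matrix.linftyOpNormedRing Matrix.linftyOpNormedAlgebra

theorem StrictlyStable.tendsto_pow {p : ℕ} {M : Matrix (Fin p) (Fin p) ℝ}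
    (hM : StrictlyStable M) : Tendsto (fun k => M ^ k) atTop (𝓝 0) := by
  rcases isEmpty_or_nonempty (Fin p) with hp | hp
  · exact tendsto_const_nhds.congr fun _ => Subsingleton.elim _ _
  have : CompleteSpace (Matrix (Fin p) (Fin p) ℂ) := FiniteDimensional.complete ℂ _
  set B := M.map (algebraMap ℝ ℂ)
  have hB : Tendsto (fun k => B ^ k) atTop (𝓝 0) :=
    tendsto_pow_nhds_zero_of_spectralRadius_lt_one <| by
      simpa using spectrum.spectralRadius_lt_of_forall_lt B (r := 1) fun μ hμ => by
        exact_mod_cast hM μ hμ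
  have hre : (fun N : Matrix (Fin p) (Fin p) ℂ => N.map Complex.re) ∘ (fun k => B ^ k) =
      fun k => M ^ k := by
    ext k : 1
    have hBk : B ^ k = (M ^ k).map (algebraMap ℝ ℂ) :=
      (map_pow (algebraMap ℝ ℂ).mapMatrix M k).symm
    ext
    simp [hBk]
  simpa [hre] using (continuous_id.matrix_map Complex.continuous_re).tendsto 0 |>.comp hB

end StrictlyStable

theorem strictlyStable_of_blockTriangular {n r : ℕ} (hrn : r ≤ n) {A : Matrix (Fin n) (Fin n) ℝ}
    (hA : ∀ i j : Fin n, r ≤ (i : ℕ) → (j : ℕ) < r → A i j = 0) (h : Assumption2 hrn A) :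
    StrictlyStable A := by
  intro μ hμ
  rw [mem_spectrum_iff_isRoot_charpoly, charpoly_map, charpoly_eq_blockA11_mul_blockA22 hrn A hA,
    Polynomial.map_mul, Polynomial.root_mul, ← charpoly_map, ← charpoly_map,
    ← mem_spectrum_iff_isRoot_charpoly, ← mem_spectrum_iff_isRoot_charpoly] at hμ
  exact hμ.elim (h.1 μ) (h.2 μ)

section RPISets

variable {n m : ℕ} {A : Matrix (Fin n) (Fin n) ℝ} {E : Matrix (Fin n) (Fin m) ℝ}
  {X : Set (Fin n → ℝ)} {D : Set (Fin m → ℝ)} {α β γ : ℝ} {P : Set (Fin n → ℝ)}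

theorem zero_mem_Rseq (hD : (0 : Fin m → ℝ) ∈ D) (α : ℝ) :
    ∀ k, (0 : Fin n → ℝ) ∈ Rseq A E D α k
  | 0 => rfl
  | k + 1 => by
    rw [Rseq]
    simpa using add_mem_add (mem_image_of_mem A.mulVec (zero_mem_Rseq hD α k))
      (mem_image_of_mem E.mulVec (zero_mem_smul_set (a := α) hD))

theorem Rseq_mul (c α : ℝ) : ∀ k, Rseq A E D (c * α) k = c • Rseq A E D α k
  | 0 => by simp [Rseq]
  | k + 1 => by
    rw [Rseq, Rseq, Rseq_mul c α k, mul_smul, image_mulVec_smul_set,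
      image_mulVec_smul_set, smul_add]

theorem Rinf_mul (c α : ℝ) : Rinf A E D (c * α) = c • Rinf A E D α := by
  simp only [Rinf, Rseq_mul, smul_set_iUnion]

theorem zero_mem_Rinf : (0 : Fin n → ℝ) ∈ Rinf A E D α :=
  mem_iUnion.2 ⟨0, rfl⟩

theorem isRPI_Rinf (h : Rinf A E D α ⊆ X) : IsRPI A E X D α (Rinf A E D α) := by
  refine ⟨h, fun x hx d hd => ?_⟩
  obtain ⟨k, hk⟩ := mem_iUnion.1 hx
  exact mem_iUnion.2 ⟨k + 1, add_mem_add (mem_image_of_mem _ hk) (mem_image_of_mem _ hd)⟩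

theorem IsRPI.mono (hD : Convex ℝ D) (hD0 : (0 : Fin m → ℝ) ∈ D) (hα : 0 ≤ α) (hαβ : α ≤ β)
    (h : IsRPI A E X D β P) : IsRPI A E X D α P :=
  ⟨h.1, fun x hx d hd => h.2 x hx d (hD.smul_set_mono hD0 hα hαβ hd)⟩

theorem IsRPI.pow_mulVec_add_mem (h : IsRPI A E X D α P) {x : Fin n → ℝ} (hx : x ∈ P) :
    ∀ k, ∀ y ∈ Rseq A E D α k, (A ^ k) *ᵥ x + y ∈ P
  | 0, y, hy => by simpa [(mem_singleton_iff.1 hy : y = 0)] using hx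
  | k + 1, _, ⟨_, ⟨y, hy, rfl⟩, _, ⟨d, hd, rfl⟩, rfl⟩ => by
    have := h.2 _ (h.pow_mulVec_add_mem hx k y hy) d hd
    rw [mulVec_add, mulVec_mulVec, ← pow_succ'] at this
    simpa only [add_assoc] using this

theorem IsRPI.pow_mulVec_mem (hD0 : (0 : Fin m → ℝ) ∈ D) (h : IsRPI A E X D α P)
    {x : Fin n → ℝ} (hx : x ∈ P) (k : ℕ) : (A ^ k) *ᵥ x ∈ P := by
  simpa using h.pow_mulVec_add_mem hx k 0 (zero_mem_Rseq hD0 α k)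

theorem isRPI_Pmax : IsRPI A E X D α (Pmax A E X D α) := by
  refine ⟨sUnion_subset fun P hP => hP.1, fun x hx d hd => ?_⟩
  obtain ⟨P, hP, hxP⟩ := mem_sUnion.1 hx
  exact mem_sUnion.2 ⟨P, hP, hP.2 x hxP d hd⟩

theorem IsRPI.subset_Pmax (h : IsRPI A E X D α P) : P ⊆ Pmax A E X D α :=
  subset_sUnion_of_mem h

theorem Pmax_antitone (hD : Convex ℝ D) (hD0 : (0 : Fin m → ℝ) ∈ D) (hα : 0 ≤ α)
    (hαβ : α ≤ β) : Pmax A E X D β ⊆ Pmax A E X D α :=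
  (isRPI_Pmax.mono hD hD0 hα hαβ).subset_Pmax

theorem Pmin_subset_Pmax : Pmin A E X D α ⊆ Pmax A E X D α :=
  sInter_subset_of_mem (mem_union_right _ rfl)

theorem mem_Pmin_iff (hne : (Pmax A E X D α).Nonempty) {x : Fin n → ℝ} :
    x ∈ Pmin A E X D α ↔ ∀ P, IsRPI A E X D α P → P.Nonempty → x ∈ P := by
  refine ⟨fun hx P hP hPne => hx P (mem_union_left _ ⟨hP, hPne⟩), fun hx P hP => ?_⟩
  rcases hP with ⟨hP, hPne⟩ | rfl
  exacts [hx P hP hPne, hx _ isRPI_Pmax hne]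

theorem Rinf_subset_of_isRPI (hX : IsClosed X) (hD0 : (0 : Fin m → ℝ) ∈ D)
    (hA : Tendsto (fun k => A ^ k) atTop (𝓝 0)) (hP : IsRPI A E X D α P) (hne : P.Nonempty) :
    Rinf A E D α ⊆ X := by
  obtain ⟨x, hx⟩ := hne
  refine iUnion_subset fun k y hy => ?_
  have hlim : Tendsto (fun j => (A ^ k) *ᵥ ((A ^ j) *ᵥ x) + y) atTop (𝓝 y) := by
    simpa using ((continuous_const.matrix_mulVec continuous_id).tendsto 0).comp
      (tendsto_pow_mulVec hA x) |>.add_const y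
  exact hX.mem_of_tendsto hlim <| .of_forall fun j =>
    hP.1 (hP.pow_mulVec_add_mem (hP.pow_mulVec_mem hD0 hx j) k y hy)

theorem smul_Pmax_add_smul_Pmax_subset (hX : Convex ℝ X) (hD : Convex ℝ D) (hα : 0 ≤ α)
    (hγ : 0 ≤ γ) {s t : ℝ} (hs : 0 ≤ s) (ht : 0 ≤ t) (hst : s + t = 1) :
    s • Pmax A E X D α + t • Pmax A E X D γ ⊆ Pmax A E X D (s * α + t * γ) := by
  refine IsRPI.subset_Pmax ⟨?_, ?_⟩
  · exact (add_subset_add (smul_set_mono isRPI_Pmax.1) (smul_set_mono isRPI_Pmax.1)).trans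
      (hX.set_combo_subset hs ht hst)
  rintro _ ⟨_, ⟨p, hp, rfl⟩, _, ⟨q, hq, rfl⟩, rfl⟩ d hd
  rw [hD.add_smul (by positivity) (by positivity), mul_smul, mul_smul] at hd
  obtain ⟨_, ⟨a, ha, rfl⟩, _, ⟨b, hb, rfl⟩, rfl⟩ := hd
  have hsplit : A *ᵥ (s • p + t • q) + E *ᵥ (s • a + t • b) =
      s • (A *ᵥ p + E *ᵥ a) + t • (A *ᵥ q + E *ᵥ b) := by
    simp only [mulVec_add, mulVec_smul, smul_add]
    abel
  rw [hsplit]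
  exact add_mem_add (smul_mem_smul_set (isRPI_Pmax.2 p hp a ha))
    (smul_mem_smul_set (isRPI_Pmax.2 q hq b hb))

theorem smul_Pmax_subset (hX : Convex ℝ X) (hD : Convex ℝ D) (hα : 0 ≤ α) (hγ : 0 ≤ γ)
    (h0 : (0 : Fin n → ℝ) ∈ Pmax A E X D γ) {s : ℝ} (hs0 : 0 ≤ s) (hs1 : s ≤ 1) :
    s • Pmax A E X D α ⊆ Pmax A E X D (s * α + (1 - s) * γ) := fun x hx =>
  smul_Pmax_add_smul_Pmax_subset hX hD hα hγ hs0 (sub_nonneg.2 hs1) (by ring)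
    ⟨x, hx, 0, zero_mem_smul_set h0, add_zero x⟩

section Norm

attribute [local instance] Matrix.linftyOpNormedAddCommGroup

theorem eventually_forall_pow_mulVec_mem (hA : Tendsto (fun k => A ^ k) atTop (𝓝 0))
    {U : Set (Fin n → ℝ)} (hU : U ∈ 𝓝 0) : ∀ᶠ x in 𝓝 0, ∀ k, (A ^ k) *ᵥ x ∈ U := by
  obtain ⟨C, hC⟩ := hA.norm.bddAbove_range
  have hC0 : 0 ≤ C := (norm_nonneg _).trans (hC ⟨0, rfl⟩)
  obtain ⟨ρ, hρ, hball⟩ := Metric.mem_nhds_iff.1 hU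
  filter_upwards [Metric.ball_mem_nhds 0 (div_pos hρ (by linarith : 0 < C + 1))] with x hx k
  rw [mem_ball_zero_iff, lt_div_iff₀ (by linarith)] at hx
  refine hball (mem_ball_zero_iff.2 ?_)
  calc ‖(A ^ k) *ᵥ x‖ ≤ ‖A ^ k‖ * ‖x‖ := linfty_opNorm_mulVec _ _
    _ ≤ (C + 1) * ‖x‖ := by gcongr; linarith [hC ⟨k, rfl⟩]
    _ < ρ := by linarith

end Norm

theorem Pmax_zero_mem_nhds (hX : X ∈ 𝓝 0) (hA : Tendsto (fun k => A ^ k) atTop (𝓝 0)) :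
    Pmax A E X D 0 ∈ 𝓝 0 := by
  refine mem_of_superset (eventually_forall_pow_mulVec_mem hA hX) (IsRPI.subset_Pmax ⟨?_, ?_⟩)
  · intro x hx
    simpa using hx 0
  · intro x hx d hd k
    rw [mem_zero.1 (zero_smul_set_subset D hd), mulVec_zero, add_zero, mulVec_mulVec, ← pow_succ]
    exact hx (k + 1)

theorem Pmax_mem_nhds_zero (hX : Convex ℝ X) (hX0 : X ∈ 𝓝 0) (hD : Convex ℝ D)
    (hA : Tendsto (fun k => A ^ k) atTop (𝓝 0)) (hβ : 0 ≤ β) (hβγ : β < γ)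
    (h0 : (0 : Fin n → ℝ) ∈ Pmax A E X D γ) : Pmax A E X D β ∈ 𝓝 0 := by
  have hγ : 0 < γ := hβ.trans_lt hβγ
  have hs : 0 < 1 - β / γ := sub_pos.2 ((div_lt_one hγ).2 hβγ)
  have hsub := smul_Pmax_subset (α := 0) hX hD le_rfl hγ.le h0 hs.le (by simp; positivity)
  rw [mul_zero, zero_add, sub_sub_cancel, div_mul_cancel₀ _ hγ.ne'] at hsub
  exact mem_of_superset ((set_smul_mem_nhds_zero_iff hs.ne').2 (Pmax_zero_mem_nhds hX0 hA)) hsub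

theorem Pmin_subset_Pmin (hD : Convex ℝ D) (hD0 : (0 : Fin m → ℝ) ∈ D) (hα : 0 ≤ α)
    (hαβ : α ≤ β) (hne : (Pmax A E X D β).Nonempty) : Pmin A E X D α ⊆ Pmin A E X D β :=
  fun _ hx => (mem_Pmin_iff hne).2 fun P hP hPne =>
    (mem_Pmin_iff (hne.mono (Pmax_antitone hD hD0 hα hαβ))).1 hx P (hP.mono hD hD0 hα hαβ) hPne

theorem IsRPI.inter_nonempty (hD0 : (0 : Fin m → ℝ) ∈ D)
    (hA : Tendsto (fun k => A ^ k) atTop (𝓝 0)) (hP : IsRPI A E X D α P) (hne : P.Nonempty)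
    {U : Set (Fin n → ℝ)} (hU : U ∈ 𝓝 0) : (P ∩ U).Nonempty := by
  obtain ⟨x, hx⟩ := hne
  obtain ⟨k, hk⟩ := (tendsto_pow_mulVec hA x |>.eventually_mem hU).exists
  exact ⟨_, hP.pow_mulVec_mem hD0 hx k, hk⟩

theorem IsRPI.smul_inter (hD : Convex ℝ D) (hD0 : (0 : Fin m → ℝ) ∈ D)
    (hP : IsRPI A E X D α P) {Q : Set (Fin n → ℝ)} (hQ : IsRPI A E X D β Q) {c : ℝ}
    (hβ : 0 ≤ β) (hβc : β ≤ c * α) : IsRPI A E X D β (c • P ∩ Q) := by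
  refine ⟨inter_subset_right.trans hQ.1, ?_⟩
  rintro _ ⟨⟨p, hp, rfl⟩, hq⟩ d hd
  refine ⟨?_, hQ.2 _ hq d hd⟩
  obtain ⟨a, ha, rfl⟩ : d ∈ c • α • D := mul_smul c α D ▸ hD.smul_set_mono hD0 hβ hβc hd
  rw [mulVec_smul, mulVec_smul, ← smul_add]
  exact smul_mem_smul_set (hP.2 p hp a ha)

theorem Pmin_subset_smul_Pmin (hD : Convex ℝ D) (hD0 : (0 : Fin m → ℝ) ∈ D)
    (hA : Tendsto (fun k => A ^ k) atTop (𝓝 0)) {c : ℝ} (hc : 0 < c) (hβ : 0 ≤ β)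
    (hβc : β ≤ c * α) (hβ0 : Pmax A E X D β ∈ 𝓝 0) (hne : (Pmax A E X D α).Nonempty) :
    Pmin A E X D β ⊆ c • Pmin A E X D α := by
  intro x hx
  rw [mem_smul_set_iff_inv_smul_mem₀ hc.ne', mem_Pmin_iff hne]
  intro P hP hPne
  have hU : (c • ·) ⁻¹' Pmax A E X D β ∈ 𝓝 0 :=
    (continuous_const_smul c).continuousAt.preimage_mem_nhds (by rwa [smul_zero])
  obtain ⟨y, hyP, hyU⟩ := hP.inter_nonempty hD0 hA hPne hU
  have hx' := (mem_Pmin_iff ⟨0, mem_of_mem_nhds hβ0⟩).1 hx _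
    (hP.smul_inter hD hD0 isRPI_Pmax hβ hβc) ⟨c • y, smul_mem_smul_set hyP, hyU⟩
  exact (mem_smul_set_iff_inv_smul_mem₀ hc.ne' _ _).1 hx'.1

theorem Rinf_subset_of_le (hX : Convex ℝ X) (hX0 : (0 : Fin n → ℝ) ∈ X) (hβ : 0 ≤ β)
    (hβγ : β ≤ γ) (hγ : Rinf A E D γ ⊆ X) : Rinf A E D β ⊆ X := by
  obtain rfl | hγ0 := (hβ.trans hβγ).eq_or_lt
  · rwa [le_antisymm hβγ hβ]
  rw [← div_mul_cancel₀ β hγ0.ne', Rinf_mul]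
  exact (smul_set_mono hγ).trans
    (hX.smul_set_subset_self hX0 (by positivity) ((div_le_one hγ0).2 hβγ))

theorem Rinf_subset_of_forall_lt_one (hX : IsClosed X)
    (h : ∀ t ∈ Ioo (0 : ℝ) 1, Rinf A E D (t * β) ⊆ X) : Rinf A E D β ⊆ X := by
  intro y hy
  have hlim : Tendsto (fun t : ℝ => t • y) (𝓝[<] 1) (𝓝 y) := by
    have hc : Continuous fun t : ℝ => t • y := continuous_id.smul continuous_const
    simpa using (hc.tendsto 1).mono_left nhdsWithin_le_nhds
  refine hX.mem_of_tendsto hlim ?_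
  filter_upwards [Ioo_mem_nhdsLT zero_lt_one] with t ht
  exact h t ht (Rinf_mul t β ▸ smul_mem_smul_set hy)

theorem ne_alphaStar_of_lt (hα : 0 < α) (hαγ : α < γ) (hγ : Rinf A E D γ ⊆ X) :
    α ≠ alphaStar A E X D := by
  by_cases hbdd : BddAbove {β | 0 < β ∧ Rinf A E D β ⊆ X}
  · exact (hαγ.trans_le (le_csSup hbdd ⟨hα.trans hαγ, hγ⟩)).ne
  · rw [alphaStar, Real.sSup_of_not_bddAbove hbdd]
    exact hα.ne'

theorem alphaStar_eq_iff (hX : Convex ℝ X) (hXc : IsClosed X) (hX0 : (0 : Fin n → ℝ) ∈ X)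
    (hα : 0 < α) (hmax : ∀ γ, α < γ → ¬Rinf A E D γ ⊆ X) :
    alphaStar A E X D = α ↔ Rinf A E D α ⊆ X := by
  have hub : α ∈ upperBounds {β | 0 < β ∧ Rinf A E D β ⊆ X} :=
    fun β hβ => not_lt.1 fun h => hmax β h hβ.2
  refine ⟨fun h => Rinf_subset_of_forall_lt_one hXc fun t ht => ?_,
    fun h => IsGreatest.csSup_eq ⟨⟨hα, h⟩, hub⟩⟩
  have hne : {β | 0 < β ∧ Rinf A E D β ⊆ X}.Nonempty := by
    refine nonempty_iff_ne_empty.2 fun he => hα.ne ?_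
    rw [← h, alphaStar, he, Real.sSup_empty]
  obtain ⟨β, hβ, htβ⟩ := exists_lt_of_lt_csSup hne
    (h.symm ▸ mul_lt_of_lt_one_left hα ht.2 : t * α < alphaStar A E X D)
  exact Rinf_subset_of_le hX hX0 (by nlinarith [ht.1]) htβ.le hβ.2

theorem Pmax_eq_empty (hX : IsClosed X) (hD0 : (0 : Fin m → ℝ) ∈ D)
    (hA : Tendsto (fun k => A ^ k) atTop (𝓝 0)) (h : ¬Rinf A E D β ⊆ X) :
    Pmax A E X D β = ∅ :=
  not_nonempty_iff_eq_empty.1 fun hne => h (Rinf_subset_of_isRPI hX hD0 hA isRPI_Pmax hne)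

variable (A E X D) in
def RPISetsContinuousAt (α : ℝ) : Prop :=
  ∀ ε : ℝ, 0 < ε → ∃ δ : ℝ, 0 < δ ∧
    Pmin A E X D α ⊆ Pmin A E X D (α + δ) ∧
    Pmin A E X D (α + δ) ⊆ (1 + ε) • Pmin A E X D α ∧
    Pmax A E X D (α + δ) ⊆ Pmax A E X D α ∧
    Pmax A E X D α ⊆ (1 + ε) • Pmax A E X D (α + δ)

theorem rpiSetsContinuousAt_of_lt (hX : Convex ℝ X) (hX0 : X ∈ 𝓝 0) (hD : Convex ℝ D)
    (hD0 : (0 : Fin m → ℝ) ∈ D) (hA : Tendsto (fun k => A ^ k) atTop (𝓝 0)) (hα : 0 < α)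
    (hαγ : α < γ) (hγ : Rinf A E D γ ⊆ X) : RPISetsContinuousAt A E X D α := by
  intro ε hε
  set s := (1 + ε)⁻¹
  have hs0 : 0 < s := by positivity
  have hs1 : s < 1 := inv_lt_one_of_one_lt₀ (by linarith)
  set δ := min (ε * α) ((1 - s) * (γ - α))
  have hδ : 0 < δ := lt_min (by positivity) (mul_pos (sub_pos.2 hs1) (sub_pos.2 hαγ))
  have hδα : α + δ ≤ (1 + ε) * α := by linarith [min_le_left (ε * α) ((1 - s) * (γ - α))]
  have hδγ : α + δ ≤ s * α + (1 - s) * γ := by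
    linarith [min_le_right (ε * α) ((1 - s) * (γ - α))]
  have h0γ : (0 : Fin n → ℝ) ∈ Pmax A E X D γ := (isRPI_Rinf hγ).subset_Pmax zero_mem_Rinf
  have hnhds : Pmax A E X D (α + δ) ∈ 𝓝 0 :=
    Pmax_mem_nhds_zero hX hX0 hD hA (by positivity) (hδγ.trans_lt (by nlinarith)) h0γ
  have hne : (Pmax A E X D (α + δ)).Nonempty := ⟨0, mem_of_mem_nhds hnhds⟩
  have hmono : Pmax A E X D (α + δ) ⊆ Pmax A E X D α := Pmax_antitone hD hD0 hα.le (by linarith)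
  refine ⟨δ, hδ, Pmin_subset_Pmin hD hD0 hα.le (by linarith) hne,
    Pmin_subset_smul_Pmin hD hD0 hA (by positivity) (by positivity) hδα hnhds (hne.mono hmono),
    hmono, ?_⟩
  exact (subset_smul_set_iff₀ (by positivity)).2 <|
    (smul_Pmax_subset hX hD hα.le (hα.trans hαγ).le h0γ hs0.le hs1.le).trans
      (Pmax_antitone hD hD0 (by positivity) hδγ)

theorem not_rpiSetsContinuousAt (hX : IsClosed X) (hD0 : (0 : Fin m → ℝ) ∈ D)
    (hA : Tendsto (fun k => A ^ k) atTop (𝓝 0)) (hα : Rinf A E D α ⊆ X)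
    (hmax : ∀ γ, α < γ → ¬Rinf A E D γ ⊆ X) : ¬RPISetsContinuousAt A E X D α := by
  intro h
  obtain ⟨δ, hδ, -, -, -, hsub⟩ := h 1 one_pos
  simpa [Pmax_eq_empty hX hD0 hA (hmax _ (lt_add_of_pos_right α hδ))] using
    hsub ((isRPI_Rinf hα).subset_Pmax zero_mem_Rinf)

theorem rpiSetsContinuousAt_of_not_subset (hX : IsClosed X) (hD0 : (0 : Fin m → ℝ) ∈ D)
    (hA : Tendsto (fun k => A ^ k) atTop (𝓝 0)) (hα : ¬Rinf A E D α ⊆ X)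
    (hmax : ∀ γ, α < γ → ¬Rinf A E D γ ⊆ X) : RPISetsContinuousAt A E X D α := by
  have h₀ := Pmax_eq_empty hX hD0 hA hα
  have h₁ := Pmax_eq_empty hX hD0 hA (hmax (α + 1) (by linarith))
  intro ε _
  refine ⟨1, one_pos, ?_⟩
  simp [h₀, h₁, subset_empty_iff.1 (h₀ ▸ Pmin_subset_Pmax),
    subset_empty_iff.1 (h₁ ▸ Pmin_subset_Pmax)]

end RPISets

theorem continuity_iff_ne_alphaStar {n m r : ℕ} (hrn : r ≤ n)
    (A : Matrix (Fin n) (Fin n) ℝ) (E : Matrix (Fin n) (Fin m) ℝ)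
    (X : Set (Fin n → ℝ)) (D : Set (Fin m → ℝ))
    (hA1 : Assumption1 hrn A E X D) (hA2 : Assumption2 hrn A)
    (α : ℝ) (hα : 0 < α) :
    α ≠ alphaStar A E X D ↔
      ∀ ε : ℝ, 0 < ε → ∃ δ : ℝ, 0 < δ ∧
        Pmin A E X D α ⊆ Pmin A E X D (α + δ) ∧
        Pmin A E X D (α + δ) ⊆ (1 + ε) • Pmin A E X D α ∧
        Pmax A E X D (α + δ) ⊆ Pmax A E X D α ∧
        Pmax A E X D α ⊆ (1 + ε) • Pmax A E X D (α + δ) := by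
  obtain ⟨hXc, hXcomp, hX0⟩ := hA1.hX
  have hD0 : (0 : Fin m → ℝ) ∈ D := interior_subset hA1.hD.2.2
  have hA := (strictlyStable_of_blockTriangular hrn hA1.lowerLeftA hA2).tendsto_pow
  change _ ↔ RPISetsContinuousAt A E X D α
  by_cases hγ : ∃ γ, α < γ ∧ Rinf A E D γ ⊆ X
  · obtain ⟨γ, hαγ, hγX⟩ := hγ
    exact iff_of_true (ne_alphaStar_of_lt hα hαγ hγX)
      (rpiSetsContinuousAt_of_lt hXc (mem_interior_iff_mem_nhds.1 hX0) hA1.hD.1 hD0 hA hα hαγ hγX)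
  push Not at hγ
  rw [ne_comm, Ne, alphaStar_eq_iff hXc hXcomp.isClosed (interior_subset hX0) hα hγ]
  by_cases hαX : Rinf A E D α ⊆ X
  · exact iff_of_false (not_not.2 hαX) (not_rpiSetsContinuousAt hXcomp.isClosed hD0 hA hαX hγ)
  · exact iff_of_true hαX (rpiSetsContinuousAt_of_not_subset hXcomp.isClosed hD0 hA hαX hγ)

end RPIScaling
end

section
/- Under Assumptions 1 and 2', for every scalar α > 0, every δ > 0, and every k ∈ ℕ, it holds that (α/(α+δ)) • Q_k^{α+δ} ⊆ Q_k^α ⊆ Q_k^{α+δ}. -/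
open Matrix Set Pointwise

namespace RPIScaling

theorem IsCSet.starConvex {p : ℕ} {S : Set (Fin p → ℝ)} (hS : IsCSet S) : StarConvex ℝ 0 S :=
  hS.1.starConvex (interior_subset hS.2.2)

theorem _root_.StarConvex.smul_set_subset_smul_set_of_le {E : Type*} [AddCommGroup E] [Module ℝ E]
    {s : Set E} (hs : StarConvex ℝ 0 s) {a b : ℝ} (ha : 0 < a) (hab : a ≤ b) :
    a • s ⊆ b • s := by
  have hb : 0 < b := ha.trans_le hab
  rintro _ ⟨x, hx, rfl⟩
  refine ⟨(a / b) • x, hs.smul_mem hx (by positivity) (div_le_one_of_le₀ hab hb.le), ?_⟩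
  change b • (a / b) • x = a • x
  rw [smul_smul, mul_div_cancel₀ _ hb.ne']

section Qseq

variable {n m : ℕ} {A : Matrix (Fin n) (Fin n) ℝ} {E : Matrix (Fin n) (Fin m) ℝ}
  {X : Set (Fin n → ℝ)} {D : Set (Fin m → ℝ)}

theorem qseq_mono_of_smul_subset {α β : ℝ} (h : α • D ⊆ β • D) :
    ∀ k, Qseq A E X D α k ⊆ Qseq A E X D β k
  | 0 => subset_rfl
  | k + 1 => inter_subset_inter_left X <| preimage_mono <|
      add_subset_add (qseq_mono_of_smul_subset h k) (neg_subset_neg.mpr (image_mono h))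

/-- Linearity of `x ↦ A x` and `d ↦ E d` moves the factor `c` from the state onto the inputs. -/
theorem smul_qseq_subset (hX : StarConvex ℝ 0 X) {c : ℝ} (hc₀ : 0 ≤ c) (hc₁ : c ≤ 1) (β : ℝ) :
    ∀ k, c • Qseq A E X D β k ⊆ Qseq A E X D (c * β) k
  | 0 => fun _ ⟨x, hx, hcx⟩ => hcx ▸ hX.smul_mem hx hc₀ hc₁
  | k + 1 => by
    rintro _ ⟨x, ⟨hAx, hx⟩, rfl⟩
    refine ⟨?_, hX.smul_mem hx hc₀ hc₁⟩
    have hcAx : c • A *ᵥ x ∈ c • (Qseq A E X D β k + -(E.mulVec '' (β • D))) :=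
      smul_mem_smul_set hAx
    have hE : c • E.mulVec '' (β • D) = E.mulVec '' ((c * β) • D) := by
      rw [← coe_mulVecLin, image_smul_set, image_smul_set, smul_smul]
    rw [smul_add, smul_set_neg, hE] at hcAx
    change c • x ∈ _
    rw [mem_preimage, mulVec_smul]
    exact add_subset_add_right (smul_qseq_subset hX hc₀ hc₁ β k) hcAx

end Qseq

theorem qseq_scaling_bounds_general {n m r : ℕ} (hrn : r ≤ n)
    (A : Matrix (Fin n) (Fin n) ℝ) (E : Matrix (Fin n) (Fin m) ℝ)
    (X : Set (Fin n → ℝ)) (D : Set (Fin m → ℝ))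
    (hA1 : Assumption1 hrn A E X D)
    (α : ℝ) (hα : 0 < α) (δ : ℝ) (hδ : 0 < δ) (k : ℕ) :
    (α / (α + δ)) • Qseq A E X D (α + δ) k ⊆ Qseq A E X D α k ∧
      Qseq A E X D α k ⊆ Qseq A E X D (α + δ) k := by
  have hαδ : 0 < α + δ := by linarith
  constructor
  · have h := smul_qseq_subset (A := A) (E := E) (D := D) hA1.hX.starConvex
      (div_nonneg hα.le hαδ.le) ((div_le_one hαδ).mpr (by linarith)) (α + δ) k
    rwa [div_mul_cancel₀ _ hαδ.ne'] at h
  · exact qseq_mono_of_smul_subset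
      (hA1.hD.starConvex.smul_set_subset_smul_set_of_le hα (by linarith)) k

theorem qseq_scaling_bounds {n m r : ℕ} (hrn : r ≤ n)
    (A : Matrix (Fin n) (Fin n) ℝ) (E : Matrix (Fin n) (Fin m) ℝ)
    (X : Set (Fin n → ℝ)) (D : Set (Fin m → ℝ))
    (hA1 : Assumption1 hrn A E X D) (hA2' : Assumption2' r A)
    (α : ℝ) (hα : 0 < α) (δ : ℝ) (hδ : 0 < δ) (k : ℕ) :
    (α / (α + δ)) • Qseq A E X D (α + δ) k ⊆ Qseq A E X D α k ∧
      Qseq A E X D α k ⊆ Qseq A E X D (α + δ) k :=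
  qseq_scaling_bounds_general hrn A E X D hA1 α hα δ hδ k

end RPIScaling
end

section
/- Under Assumptions 1 and 2', for every scalar α > 0 and every ε > 0, there exists δ > 0 such that C_max^α ⊆ C_max^{α+δ} ⊆ (1+ε) • C_max^α, where C_max^β denotes the maximal controlled invariant set for parameter β. -/
open Matrix Set Pointwise

namespace RPIScaling

/-!
The dynamics are linear, so scaling a controlled invariant set scales its inputs: if `C` is
controlled invariant for `c * α` with `c ≥ 1`, then `c⁻¹ • C` is controlled invariant for `α`,
and it stays inside `𝒳` because `𝒳` is star-shaped about `0`. Hence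
`C_max^{cα} ⊆ c • C_max^α`, and `δ = ε α` works; the other inclusion is monotonicity in `α`,
since `𝒟*` is star-shaped about `0`.
-/

lemma _root_.StarConvex.smul_subset_smul {V : Type*} [AddCommGroup V] [Module ℝ V] {S : Set V}
    (hS : StarConvex ℝ 0 S) {a b : ℝ} (ha : 0 < a) (hab : a ≤ b) : a • S ⊆ b • S := by
  have hb : b = (b / a) * a := by field_simp
  rw [hb, mul_smul]
  exact fun _ hx => (hS.zero_smul a).mem_smul hx ((one_le_div ha).mpr hab)

section ControlledInvariance

variable {n m : ℕ} {A : Matrix (Fin n) (Fin n) ℝ} {E : Matrix (Fin n) (Fin m) ℝ}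
  {X : Set (Fin n → ℝ)} {D : Set (Fin m → ℝ)} {α β : ℝ} {C : Set (Fin n → ℝ)}

lemma IsCI.subset_cmax (hC : IsCI A E X D α C) : C ⊆ Cmax A E X D α :=
  subset_sUnion_of_mem hC

lemma IsCI.mono_input (hC : IsCI A E X D α C) (hD : α • D ⊆ β • D) : IsCI A E X D β C := by
  refine ⟨hC.1, fun x hx => ?_⟩
  obtain ⟨d, hd, hstep⟩ := hC.2 x hx
  exact ⟨d, hD hd, hstep⟩

lemma cmax_mono_input (hD : α • D ⊆ β • D) : Cmax A E X D α ⊆ Cmax A E X D β :=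
  sUnion_subset fun _ hC => (IsCI.mono_input hC hD).subset_cmax

lemma IsCI.inv_smul (hX : StarConvex ℝ 0 X) {c : ℝ} (hc : 1 ≤ c)
    (hC : IsCI A E X D (c * α) C) : IsCI A E X D α (c⁻¹ • C) := by
  have hc₀ : c ≠ 0 := (zero_lt_one.trans_le hc).ne'
  constructor
  · rintro _ ⟨x, hx, rfl⟩
    exact hX.smul_mem (hC.1 hx) (by positivity) (inv_le_one_of_one_le₀ hc)
  · rintro _ ⟨x, hx, rfl⟩
    obtain ⟨d, hd, hstep⟩ := hC.2 x hx
    have hd' : c⁻¹ • d ∈ α • D := by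
      rwa [← smul_mem_smul_set_iff₀ hc₀, smul_inv_smul₀ hc₀, smul_smul]
    refine ⟨c⁻¹ • d, hd', ?_⟩
    rw [mulVec_smul, mulVec_smul, ← smul_add]
    exact smul_mem_smul_set hstep

lemma cmax_mul_subset_smul_cmax (hX : StarConvex ℝ 0 X) {c : ℝ} (hc : 1 ≤ c) :
    Cmax A E X D (c * α) ⊆ c • Cmax A E X D α := by
  have hc₀ : c ≠ 0 := (zero_lt_one.trans_le hc).ne'
  refine sUnion_subset fun C hC => ?_
  rw [← smul_set_subset_smul_set_iff₀ (inv_ne_zero hc₀), inv_smul_smul₀ hc₀]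
  exact (hC.inv_smul hX hc).subset_cmax

end ControlledInvariance

theorem cmax_continuity_general {n m r : ℕ} (hrn : r ≤ n)
    (A : Matrix (Fin n) (Fin n) ℝ) (E : Matrix (Fin n) (Fin m) ℝ)
    (X : Set (Fin n → ℝ)) (D : Set (Fin m → ℝ))
    (hA1 : Assumption1 hrn A E X D)
    (α : ℝ) (hα : 0 < α) (ε : ℝ) (hε : 0 < ε) :
    ∃ δ : ℝ, 0 < δ ∧
      Cmax A E X D α ⊆ Cmax A E X D (α + δ) ∧
      Cmax A E X D (α + δ) ⊆ (1 + ε) • Cmax A E X D α := by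
  have hX : StarConvex ℝ 0 X := hA1.hX.1.starConvex (interior_subset hA1.hX.2.2)
  have hD : StarConvex ℝ 0 D := hA1.hD.1.starConvex (interior_subset hA1.hD.2.2)
  refine ⟨ε * α, by positivity, ?_, ?_⟩ <;> rw [show α + ε * α = (1 + ε) * α by ring]
  · exact cmax_mono_input (hD.smul_subset_smul hα (by nlinarith))
  · exact cmax_mul_subset_smul_cmax hX (by linarith)

theorem cmax_continuity {n m r : ℕ} (hrn : r ≤ n)
    (A : Matrix (Fin n) (Fin n) ℝ) (E : Matrix (Fin n) (Fin m) ℝ)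
    (X : Set (Fin n → ℝ)) (D : Set (Fin m → ℝ))
    (hA1 : Assumption1 hrn A E X D) (hA2' : Assumption2' r A)
    (α : ℝ) (hα : 0 < α) (ε : ℝ) (hε : 0 < ε) :
    ∃ δ : ℝ, 0 < δ ∧
      Cmax A E X D α ⊆ Cmax A E X D (α + δ) ∧
      Cmax A E X D (α + δ) ⊆ (1 + ε) • Cmax A E X D α :=
  cmax_continuity_general hrn A E X D hA1 α hα ε hε

end RPIScaling
end

section
/- Under Assumptions 1 and 2, let ε > 0 and let k ∈ ℕ be such that R_∞^1 ⊆ (1+ε) • R_k^1. Then α* ≥ (1+ε)⁻¹ · ᾱ_k, where ᾱ_k := sup{α > 0 | α • R_k^1 ⊆ 𝒳}. -/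
open Matrix Set Pointwise

namespace RPIScaling

/-!
Scaling the disturbance set by `α` scales every reachable set by `α`, so
`α* = sup {α > 0 | α • R_∞¹ ⊆ 𝒳}`. If `α • R_k¹ ⊆ 𝒳`, then
`(α / (1 + ε)) • R_∞¹ ⊆ α • R_k¹ ⊆ 𝒳`, hence `α / (1 + ε) ≤ α*`. The supremum defining `α*` is a
genuine (finite) one because `R_∞¹` contains a nonzero vector `E d` and `𝒳` is bounded.
-/

section ScalingSet

variable {V : Type*} [AddCommGroup V] [Module ℝ V]

theorem div_mem_scalingSet_of_subset_smul {R Q X : Set V} {c α : ℝ} (hc : 0 < c)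
    (hRQ : R ⊆ c • Q) (hα : 0 < α ∧ α • Q ⊆ X) : 0 < α / c ∧ (α / c) • R ⊆ X := by
  refine ⟨div_pos hα.1 hc, ?_⟩
  calc (α / c) • R ⊆ (α / c) • c • Q := smul_set_mono hRQ
    _ = α • Q := by rw [smul_smul, div_mul_cancel₀ α hc.ne']
    _ ⊆ X := hα.2

theorem sSup_scalingSet_le_mul {R Q X : Set V} {c : ℝ} (hc : 0 < c) (hRQ : R ⊆ c • Q)
    (hbdd : BddAbove {α : ℝ | 0 < α ∧ α • R ⊆ X}) :
    sSup {α : ℝ | 0 < α ∧ α • Q ⊆ X} ≤ c * sSup {α : ℝ | 0 < α ∧ α • R ⊆ X} := by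
  have hsup_nonneg : 0 ≤ sSup {α : ℝ | 0 < α ∧ α • R ⊆ X} :=
    Real.sSup_nonneg fun α hα => hα.1.le
  refine Real.sSup_le (fun α hα => ?_) (by positivity)
  have hα_div := le_csSup hbdd (div_mem_scalingSet_of_subset_smul hc hRQ hα)
  rwa [div_le_iff₀' hc] at hα_div

end ScalingSet

theorem bddAbove_scalingSet {V : Type*} [NormedAddCommGroup V] [NormedSpace ℝ V]
    {R X : Set V} {w : V} (hX : Bornology.IsBounded X) (hw : w ∈ R) (hw0 : w ≠ 0) :
    BddAbove {α : ℝ | 0 < α ∧ α • R ⊆ X} := by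
  obtain ⟨C, hC⟩ := isBounded_iff_forall_norm_le.1 hX
  refine ⟨C / ‖w‖, fun α ⟨hα, hαR⟩ => ?_⟩
  have hαw := hC _ (hαR (smul_mem_smul_set hw))
  rw [norm_smul, Real.norm_of_nonneg hα.le] at hαw
  rwa [le_div_iff₀ (norm_pos_iff.2 hw0)]

theorem _root_.LinearMap.exists_mem_apply_ne_zero_of_mem_nhds {𝕜 E F : Type*}
    [NontriviallyNormedField 𝕜] [AddCommGroup E] [Module 𝕜 E] [TopologicalSpace E]
    [ContinuousSMul 𝕜 E] [AddCommGroup F] [Module 𝕜 F] {f : E →ₗ[𝕜] F} {D : Set E}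
    (hf : f ≠ 0) (hD : D ∈ nhds 0) : ∃ d ∈ D, f d ≠ 0 := by
  by_contra! hDker
  have hker : LinearMap.ker f = ⊤ :=
    ((absorbent_nhds_zero hD).mono fun d hd => hDker d hd).submodule_eq_top
  exact hf (LinearMap.ker_eq_top.1 hker)

theorem _root_.Matrix.image_mulVec_smul_set_s17 {p q : ℕ} (M : Matrix (Fin p) (Fin q) ℝ) (α : ℝ)
    (S : Set (Fin q → ℝ)) : M.mulVec '' (α • S) = α • M.mulVec '' S :=
  image_smul_set M.mulVecLin α S

section Reachable

variable {n m : ℕ} (A : Matrix (Fin n) (Fin n) ℝ) (E : Matrix (Fin n) (Fin m) ℝ)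
  (D : Set (Fin m → ℝ))

theorem Rseq_eq_smul (α : ℝ) (j : ℕ) : Rseq A E D α j = α • Rseq A E D 1 j := by
  induction j with
  | zero => simp [Rseq, Set.smul_set_singleton]
  | succ j ih =>
    rw [Rseq, Rseq, ih, one_smul, image_mulVec_smul_set_s17, image_mulVec_smul_set_s17, smul_add]

theorem Rinf_eq_smul (α : ℝ) : Rinf A E D α = α • Rinf A E D 1 := by
  simp only [Rinf, Set.smul_set_iUnion, Rseq_eq_smul A E D α]

theorem alphaStar_eq_sSup (X : Set (Fin n → ℝ)) :
    alphaStar A E X D = sSup {α : ℝ | 0 < α ∧ α • Rinf A E D 1 ⊆ X} := by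
  rw [alphaStar]
  congr! 4 with α
  rw [Rinf_eq_smul A E D α]

theorem mulVec_mem_Rinf {d : Fin m → ℝ} (hd : d ∈ D) : E *ᵥ d ∈ Rinf A E D 1 := by
  refine mem_iUnion.2 ⟨1, ⟨0, ⟨0, rfl, mulVec_zero A⟩, E *ᵥ d, ⟨d, ?_, rfl⟩, zero_add _⟩⟩
  rwa [one_smul]

end Reachable

theorem Assumption1.E_ne_zero {n m r : ℕ} {hrn : r ≤ n} {A : Matrix (Fin n) (Fin n) ℝ}
    {E : Matrix (Fin n) (Fin m) ℝ} {X : Set (Fin n → ℝ)} {D : Set (Fin m → ℝ)}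
    (hA1 : Assumption1 hrn A E X D) : E ≠ 0 := by
  intro hE
  have hC : controllabilityMatrix hrn A E = 0 := by
    ext i p
    simp [controllabilityMatrix, blockE1, hE]
  have hrank := hA1.controllable
  rw [hC, Matrix.rank_zero] at hrank
  exact hA1.hr.ne hrank

theorem alphaStar_lower_bound_general {n m r : ℕ} (hrn : r ≤ n)
    (A : Matrix (Fin n) (Fin n) ℝ) (E : Matrix (Fin n) (Fin m) ℝ)
    (X : Set (Fin n → ℝ)) (D : Set (Fin m → ℝ))
    (hA1 : Assumption1 hrn A E X D)
    (ε : ℝ) (hε : 0 < ε) (k : ℕ)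
    (hk : Rinf A E D 1 ⊆ (1 + ε) • Rseq A E D 1 k) :
    (1 + ε)⁻¹ * sSup {α : ℝ | 0 < α ∧ α • Rseq A E D 1 k ⊆ X} ≤ alphaStar A E X D := by
  have hε1 : (0 : ℝ) < 1 + ε := by linarith
  obtain ⟨d, hdD, hEd⟩ := LinearMap.exists_mem_apply_ne_zero_of_mem_nhds
    (Matrix.toLin'.map_ne_zero_iff.2 hA1.E_ne_zero)
    (mem_interior_iff_mem_nhds.1 hA1.hD.2.2)
  have hbdd := bddAbove_scalingSet hA1.hX.2.1.isBounded (mulVec_mem_Rinf A E D hdD) hEd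
  rw [alphaStar_eq_sSup, inv_mul_le_iff₀ hε1]
  exact sSup_scalingSet_le_mul hε1 hk hbdd

theorem alphaStar_lower_bound {n m r : ℕ} (hrn : r ≤ n)
    (A : Matrix (Fin n) (Fin n) ℝ) (E : Matrix (Fin n) (Fin m) ℝ)
    (X : Set (Fin n → ℝ)) (D : Set (Fin m → ℝ))
    (hA1 : Assumption1 hrn A E X D) (hA2 : Assumption2 hrn A)
    (ε : ℝ) (hε : 0 < ε) (k : ℕ)
    (hk : Rinf A E D 1 ⊆ (1 + ε) • Rseq A E D 1 k) :
    (1 + ε)⁻¹ * sSup {α : ℝ | 0 < α ∧ α • Rseq A E D 1 k ⊆ X} ≤ alphaStar A E X D :=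
  alphaStar_lower_bound_general hrn A E X D hA1 ε hε k hk

end RPIScaling
end
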